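/- Let n ≥ 2 be even, n = 2k, and let β_q be the coefficient of t^q in the power series (1-t^{4k})/((1-t²)(1-t^{4k-2})). Then β_q = 2 if q ∈ {2j(n-1) : j ∈ ℕ}, β_q = 1 if q is a nonnegative even integer not of the form 2j(n-1) with j ≥ 1, and β_q = 0 otherwise; moreover lim_{q→∞} (1/q) ∑_{j=0}^{q} (-1)^j β_j = n/(2(n-1)). -/

import Mathlib

/-!
Since `1 - X^(e+d) = (1 - X^e) + (1 - X^d) - (1 - X^e)(1 - X^d)`, the series is
`1/(1 - X^e) + 1/(1 - X^d) - 1` with `e = 2`, `d = 4k - 2 = 2(n - 1)`, whose coefficients can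
be read off. They vanish in odd degree, so the signs in the alternating sum do not matter, and
the partial sums up to `q` are `⌊q/2⌋ + ⌊q/d⌋ + 1`; hence the Cesàro limit
`1/2 + 1/d = n/(2(n-1))`.
-/

open scoped Classical

open PowerSeries Filter

open Finset Topology

theorem Finset.sum_range_succ_ite_dvd {M : Type*} [AddCommMonoidWithOne M] (d q : ℕ) :
    (∑ j ∈ range (q + 1), if d ∣ j then (1 : M) else 0) = ((q / d : ℕ) : M) + 1 := by
  rw [sum_range_succ', sum_boole, Nat.card_multiples]
  simp

theorem tendsto_natCast_div_div_atTop (d : ℕ) :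
    Tendsto (fun q : ℕ => ((q / d : ℕ) : ℝ) / q) atTop (𝓝 (1 / d)) := by
  have := (tendsto_nat_floor_mul_div_atTop (a := (1 / d : ℝ)) (by positivity)).comp
    tendsto_natCast_atTop_atTop
  refine this.congr fun q => ?_
  simp [← Nat.floor_div_eq_div (K := ℝ), div_eq_inv_mul]

namespace PowerSeries

variable {R : Type*} [CommRing R] {e d : ℕ} {P : R⟦X⟧}

theorem expand_mk_one_mul_one_sub_X_pow (hd : d ≠ 0) :
    expand d hd (mk 1 : R⟦X⟧) * (1 - X ^ d) = 1 := by
  simpa using congrArg (expand d hd) (mk_one_mul_one_sub_eq_one R)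

theorem eq_expand_add_expand_sub_one (he : e ≠ 0) (hd : d ≠ 0)
    (hP : P * ((1 - X ^ e) * (1 - X ^ d)) = 1 - X ^ (e + d)) :
    P = expand e he (mk 1) + expand d hd (mk 1) - 1 := by
  set Fe := expand e he (mk 1 : R⟦X⟧)
  set Fd := expand d hd (mk 1 : R⟦X⟧)
  have hFe : Fe * (1 - X ^ e) = 1 := expand_mk_one_mul_one_sub_X_pow he
  have hFd : Fd * (1 - X ^ d) = 1 := expand_mk_one_mul_one_sub_X_pow hd
  calc P = P * ((Fe * (1 - X ^ e)) * (Fd * (1 - X ^ d))) := by rw [hFe, hFd, mul_one, mul_one]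
    _ = P * ((1 - X ^ e) * (1 - X ^ d)) * (Fe * Fd) := by ring
    _ = (Fe * (1 - X ^ e)) * Fd + (Fd * (1 - X ^ d)) * Fe
          - (Fe * (1 - X ^ e)) * (Fd * (1 - X ^ d)) := by rw [hP, pow_add]; ring
    _ = Fe + Fd - 1 := by rw [hFe, hFd]; ring

theorem coeff_eq_of_mul_eq (he : e ≠ 0) (hd : d ≠ 0)
    (hP : P * ((1 - X ^ e) * (1 - X ^ d)) = 1 - X ^ (e + d)) (q : ℕ) :
    coeff q P =
      (if e ∣ q then 1 else 0) + (if d ∣ q then 1 else 0) - if q = 0 then 1 else 0 := by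
  simp [eq_expand_add_expand_sub_one he hd hP, coeff_expand, coeff_one]

theorem coeff_eq_ite_of_mul_eq (he : e ≠ 0) (hd : d ≠ 0) (hed : e ∣ d)
    (hP : P * ((1 - X ^ e) * (1 - X ^ d)) = 1 - X ^ (e + d)) (q : ℕ) :
    coeff q P = if d ∣ q ∧ q ≠ 0 then 2 else if e ∣ q then 1 else 0 := by
  rw [coeff_eq_of_mul_eq he hd hP]
  rcases eq_or_ne q 0 with rfl | hq
  · simp
  by_cases hdq : d ∣ q
  · simp [hdq, hq, hed.trans hdq, one_add_one_eq_two]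
  · simp [hdq, hq]

theorem sum_range_coeff_of_mul_eq (he : e ≠ 0) (hd : d ≠ 0)
    (hP : P * ((1 - X ^ e) * (1 - X ^ d)) = 1 - X ^ (e + d)) (q : ℕ) :
    ∑ j ∈ range (q + 1), coeff j P = ((q / e : ℕ) : R) + (q / d : ℕ) + 1 := by
  simp only [coeff_eq_of_mul_eq he hd hP, sum_add_distrib, sum_sub_distrib,
    sum_range_succ_ite_dvd, sum_ite_eq', mem_range, Nat.zero_lt_succ, if_true]
  ring

theorem tendsto_sum_range_coeff_div_of_mul_eq {P : ℚ⟦X⟧} (he : e ≠ 0) (hd : d ≠ 0)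
    (hP : P * ((1 - X ^ e) * (1 - X ^ d)) = 1 - X ^ (e + d)) :
    Tendsto (fun q : ℕ => (∑ j ∈ range (q + 1), ((coeff j P : ℚ) : ℝ)) / q) atTop
      (𝓝 (1 / e + 1 / d)) := by
  have hsum (q : ℕ) :
      ∑ j ∈ range (q + 1), ((coeff j P : ℚ) : ℝ) = (q / e : ℕ) + (q / d : ℕ) + 1 := by
    exact_mod_cast sum_range_coeff_of_mul_eq he hd hP q
  have hlim := ((tendsto_natCast_div_div_atTop e).add (tendsto_natCast_div_div_atTop d)).add
    tendsto_one_div_atTop_nhds_zero_nat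
  rw [add_zero] at hlim
  refine hlim.congr fun q => ?_
  rw [hsum, add_div, add_div]

end PowerSeries

theorem poincare_series_even (n k : ℕ) (hk : 1 ≤ k) (hn : n = 2 * k)
    (P : PowerSeries ℚ)
    (hP : P * ((1 - X ^ 2) * (1 - X ^ (4 * k - 2))) = 1 - X ^ (4 * k)) :
    (∀ q : ℕ, (PowerSeries.coeff q) P =
      if ∃ j : ℕ, 1 ≤ j ∧ q = 2 * j * (n - 1) then 2
      else if Even q then 1 else 0) ∧
    Tendsto (fun q : ℕ =>
        (∑ j ∈ Finset.range (q + 1), (-1 : ℝ) ^ j * ((PowerSeries.coeff (R := ℚ) j) P : ℝ)) / q)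
      atTop (nhds (n / (2 * (n - 1)) : ℝ)) := by
  subst hn
  have hd : 2 * (2 * k - 1) ≠ 0 := by omega
  have hP' : P * ((1 - X ^ 2) * (1 - X ^ (2 * (2 * k - 1)))) =
      1 - X ^ (2 + 2 * (2 * k - 1)) := by
    rwa [show 2 * (2 * k - 1) = 4 * k - 2 by omega, show 2 + (4 * k - 2) = 4 * k by omega]
  have hcoeff := coeff_eq_ite_of_mul_eq two_ne_zero hd (dvd_mul_right 2 _) hP'
  have hmult (q : ℕ) :
      (∃ j, 1 ≤ j ∧ q = 2 * j * (2 * k - 1)) ↔ 2 * (2 * k - 1) ∣ q ∧ q ≠ 0 := by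
    constructor
    · rintro ⟨j, hj, rfl⟩
      exact ⟨⟨j, by ring⟩, mul_ne_zero (by omega) (by omega)⟩
    · rintro ⟨⟨j, rfl⟩, hq⟩
      exact ⟨j, Nat.pos_of_ne_zero (right_ne_zero_of_mul hq), by ring⟩
  refine ⟨fun q => by simp only [hcoeff, hmult, even_iff_two_dvd], ?_⟩
  have hsign (j : ℕ) : (-1 : ℝ) ^ j * ((coeff j P : ℚ) : ℝ) = coeff j P := by
    rcases Nat.even_or_odd j with hj | hj
    · rw [hj.neg_one_pow, one_mul]
    · have h2 : ¬ 2 ∣ j := Nat.not_even_iff_odd.mpr hj ∘ even_iff_two_dvd.mpr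
      have hd2 : ¬ 2 * (2 * k - 1) ∣ j := fun h => h2 (dvd_of_mul_right_dvd h)
      simp [hcoeff, h2, hd2]
  simp only [hsign]
  convert tendsto_sum_range_coeff_div_of_mul_eq two_ne_zero hd hP' using 2
  have hk' : (2 * k - 1 : ℝ) ≠ 0 := by
    have : (1 : ℝ) ≤ k := by exact_mod_cast hk
    linarith
  push_cast [Nat.cast_sub (by omega : 1 ≤ 2 * k)]
  field_simp
  ring
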